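/- Let v ∈ C²([0,π]) be real-valued and set c = (1/π)∫₀^π v(x)dx. Then as k → +∞, d(−k²) = (e^{πk}/(2k)) { 1 + πc/(2k) + (1/(8k²))(π²c² − 2(v(0) + v(π))) + O(1/k³) }; that is, there exist constants C > 0 and k₀ such that for all k ≥ k₀, |d(−k²) − (e^{πk}/(2k))(1 + πc/(2k) + (π²c² − 2(v(0)+v(π)))/(8k²))| ≤ C e^{πk} k^{−4}. -/

import Mathlib

/-!
For `λ = -k²` compare `y₁` with `φ = (Y_k - Y_{-k}) / (2k)`, where
`Y_k(x) = e^{kx} (1 + a(x)/k + b(x)/k²)`, `a(x) = ½ ∫₀ˣ v` and `b = a²/2 - (v(x) + v(0))/4`.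
These coefficients are forced by requiring that `Y_k` solve `y'' = (v + k²) y` up to
`e^{kx} (b'' - v b) / k²` and that `φ(0) = 0`, `φ'(0) = 1`. The error `ψ = y₁ - φ` then solves
`ψ'' = (v + k²) ψ + O(sinh(kx) / k³)` with zero initial data; variation of constants against
`e^{±kx}` and Grönwall's inequality for `e^{-kx} |ψ|` give `ψ(π) = O(e^{πk} / k⁴)`. Expanding
`Y_k(π) / (2k)` gives the stated three terms, and `Y_{-k}(π) / (2k) = O(e^{-πk})`.
-/

open Real Set MeasureTheory intervalIntegral

theorem hasDerivWithinAt_integral_Icc {f : ℝ → ℝ} {a b t : ℝ}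
    (hf : ContinuousOn f (Icc a b)) (ht : t ∈ Icc a b) :
    HasDerivWithinAt (fun x => ∫ s in a..x, f s) (f t) (Icc a b) t := by
  have : Fact (t ∈ Icc a b) := ⟨ht⟩
  exact integral_hasDerivWithinAt_right
    ((hf.mono (by rw [uIcc_of_le ht.1]; exact Icc_subset_Icc le_rfl ht.2)).intervalIntegrable)
    (hf.stronglyMeasurableAtFilter_nhdsWithin measurableSet_Icc t) (hf t ht)

theorem integral_eq_sub_of_hasDerivWithinAt_Icc {f f' : ℝ → ℝ} {a b : ℝ} (hab : a ≤ b)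
    (hf : ∀ x ∈ Icc a b, HasDerivWithinAt f (f' x) (Icc a b) x)
    (hf' : ContinuousOn f' (Icc a b)) :
    ∫ t in a..b, f' t = f b - f a :=
  integral_eq_sub_of_hasDeriv_right_of_le hab (fun x hx => (hf x hx).continuousWithinAt)
    (fun x hx => ((hf x (Ioo_subset_Icc_self hx)).hasDerivAt
      (Icc_mem_nhds hx.1 hx.2)).hasDerivWithinAt)
    ((uIcc_of_le hab ▸ hf').intervalIntegrable)

theorem le_mul_exp_of_le_mul_integral_add {h : ℝ → ℝ} {b K ε : ℝ} (hb : 0 ≤ b) (hK : 0 ≤ K)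
    (hh : ContinuousOn h (Icc 0 b))
    (bound : ∀ x ∈ Icc 0 b, h x ≤ K * (∫ t in 0..x, h t) + ε) :
    h b ≤ ε * exp (K * b) := by
  have hΦ' : ∀ x ∈ Ico 0 b, HasDerivWithinAt (fun x => ∫ t in 0..x, h t) (h x) (Ici x) x :=
    fun x hx => (hasDerivWithinAt_integral_Icc hh (Ico_subset_Icc_self hx)).mono_of_mem_nhdsWithin
      (Icc_mem_nhdsGE_of_mem hx)
  have hΦ := le_gronwallBound_of_liminf_deriv_right_le (δ := 0)
    (fun x hx => (hasDerivWithinAt_integral_Icc hh hx).continuousWithinAt)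
    (fun x hx _ hr => (hΦ' x hx).liminf_right_slope_le hr)
    (by simp) (fun x hx => bound x (Ico_subset_Icc_self hx)) b ⟨hb, le_rfl⟩
  calc h b ≤ K * (∫ t in 0..b, h t) + ε := bound b ⟨hb, le_rfl⟩
    _ ≤ K * gronwallBound 0 K ε b + ε := by gcongr; simpa using hΦ
    _ = ε * exp (K * b) := by
      rcases hK.eq_or_lt with rfl | hK
      · simp
      · rw [gronwallBound_of_K_ne_0 hK.ne']; field_simp; ring

theorem hasDerivAt_exp_mul (k x : ℝ) : HasDerivAt (fun t => exp (k * t)) (k * exp (k * x)) x := by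
  simpa [mul_comm] using ((hasDerivAt_id x).const_mul k).exp

theorem exp_neg_mul_mul_add_eq_integral {ψ ψ' g : ℝ → ℝ} {c b : ℝ} (hb : 0 ≤ b)
    (hψ : ∀ x ∈ Icc 0 b, HasDerivWithinAt ψ (ψ' x) (Icc 0 b) x)
    (hψ' : ∀ x ∈ Icc 0 b, HasDerivWithinAt ψ' (c ^ 2 * ψ x + g x) (Icc 0 b) x)
    (hg : ContinuousOn g (Icc 0 b)) (h0 : ψ 0 = 0) (h0' : ψ' 0 = 0) :
    exp (-c * b) * (ψ' b + c * ψ b) = ∫ t in 0..b, exp (-c * t) * g t := by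
  rw [integral_eq_sub_of_hasDerivWithinAt_Icc hb
    (f := fun x => exp (-c * x) * (ψ' x + c * ψ x)) (f' := fun t => exp (-c * t) * g t)
    (fun x hx => ?_) ((Continuous.continuousOn (by fun_prop)).mul hg)]
  · simp [h0, h0']
  · refine ((hasDerivAt_exp_mul (-c) x).hasDerivWithinAt.mul
      ((hψ' x hx).add ((hψ x hx).const_mul c))).congr_deriv ?_
    simp only [Pi.add_apply]
    ring

theorem exp_neg_mul_abs_le_integral_of_hasDerivWithinAt {ψ ψ' g : ℝ → ℝ} {k b : ℝ}
    (hk : 0 < k) (hb : 0 ≤ b)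
    (hψ : ∀ x ∈ Icc 0 b, HasDerivWithinAt ψ (ψ' x) (Icc 0 b) x)
    (hψ' : ∀ x ∈ Icc 0 b, HasDerivWithinAt ψ' (k ^ 2 * ψ x + g x) (Icc 0 b) x)
    (hg : ContinuousOn g (Icc 0 b)) (h0 : ψ 0 = 0) (h0' : ψ' 0 = 0) :
    exp (-(k * b)) * |ψ b| ≤ (∫ t in 0..b, exp (-(k * t)) * |g t|) / k := by
  have hq₁ := exp_neg_mul_mul_add_eq_integral hb hψ hψ' hg h0 h0'
  have hq₂ := exp_neg_mul_mul_add_eq_integral (c := -k) hb hψ (by simpa only [neg_sq] using hψ')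
    hg h0 h0'
  simp only [neg_mul, neg_neg] at hq₁ hq₂
  set I := ∫ t in 0..b, exp (-(k * t)) * |g t|
  have hg_int : ∀ c : ℝ, IntervalIntegrable (fun t => exp (c * t) * |g t|) volume 0 b := fun c =>
    (uIcc_of_le hb ▸ (Continuous.continuousOn (by fun_prop)).mul hg.abs).intervalIntegrable
  have hI₁ : |∫ t in 0..b, exp (-(k * t)) * g t| ≤ I := by
    refine (abs_integral_le_integral_abs hb).trans_eq ?_
    simp only [abs_mul, abs_exp]; rfl
  have hI₂ : exp (-(2 * k * b)) * |∫ t in 0..b, exp (k * t) * g t| ≤ I := by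
    calc exp (-(2 * k * b)) * |∫ t in 0..b, exp (k * t) * g t|
        ≤ exp (-(2 * k * b)) * ∫ t in 0..b, exp (k * t) * |g t| := by
          gcongr
          refine (abs_integral_le_integral_abs hb).trans_eq ?_
          simp only [abs_mul, abs_exp]
      _ = ∫ t in 0..b, exp (-(2 * k * b) + k * t) * |g t| := by
          rw [← intervalIntegral.integral_const_mul]; simp only [exp_add, mul_assoc]
      _ ≤ I := by
          refine integral_mono_on hb ?_ (by simpa using hg_int (-k)) fun t ht => ?_
          · simpa [exp_add, mul_assoc] using (hg_int k).const_mul _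
          · gcongr
            nlinarith [ht.2]
  have hψb : 2 * k * (exp (-(k * b)) * ψ b) = exp (-(k * b)) * (ψ' b + k * ψ b)
      - exp (-(2 * k * b)) * (exp (k * b) * (ψ' b + -(k * ψ b))) := by
    have : exp (-(2 * k * b)) * exp (k * b) = exp (-(k * b)) := by rw [← exp_add]; ring_nf
    linear_combination (ψ' b - k * ψ b) * this
  have key : |2 * k * (exp (-(k * b)) * ψ b)| ≤ 2 * I := by
    rw [hψb, hq₁, hq₂]
    refine (abs_sub _ _).trans ?_
    rw [abs_mul _ (∫ t in 0..b, _), abs_exp]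
    linarith
  rw [abs_mul, abs_mul, abs_mul, abs_exp, abs_of_pos hk, abs_two] at key
  rw [le_div_iff₀ hk]
  linarith

theorem exp_neg_mul_abs_le_of_hasDerivWithinAt {ψ ψ' v f : ℝ → ℝ} {k b V ε : ℝ}
    (hk : 0 < k) (hb : 0 ≤ b)
    (hψ : ∀ x ∈ Icc 0 b, HasDerivWithinAt ψ (ψ' x) (Icc 0 b) x)
    (hψ' : ∀ x ∈ Icc 0 b, HasDerivWithinAt ψ' ((v x + k ^ 2) * ψ x + f x) (Icc 0 b) x)
    (hv : ContinuousOn v (Icc 0 b)) (hf : ContinuousOn f (Icc 0 b))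
    (hvV : ∀ x ∈ Icc 0 b, |v x| ≤ V) (hfε : ∀ x ∈ Icc 0 b, exp (-(k * x)) * |f x| ≤ ε)
    (h0 : ψ 0 = 0) (h0' : ψ' 0 = 0) :
    exp (-(k * b)) * |ψ b| ≤ b * ε / k * exp (V / k * b) := by
  have h0b : (0 : ℝ) ∈ Icc 0 b := ⟨le_rfl, hb⟩
  have hV : 0 ≤ V := (abs_nonneg _).trans (hvV 0 h0b)
  have hε : 0 ≤ ε := (mul_nonneg (exp_pos _).le (abs_nonneg _)).trans (hfε 0 h0b)
  have hψc : ContinuousOn ψ (Icc 0 b) := fun x hx => (hψ x hx).continuousWithinAt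
  have hh : ContinuousOn (fun x => exp (-(k * x)) * |ψ x|) (Icc 0 b) :=
    (Continuous.continuousOn (by fun_prop)).mul hψc.abs
  refine le_mul_exp_of_le_mul_integral_add hb (div_nonneg hV hk.le) hh fun x hx => ?_
  have hsub : Icc 0 x ⊆ Icc 0 b := Icc_subset_Icc le_rfl hx.2
  have hint : IntervalIntegrable (fun t => exp (-(k * t)) * |ψ t|) volume 0 x :=
    (uIcc_of_le hx.1 ▸ hh.mono hsub).intervalIntegrable
  have hx_le := exp_neg_mul_abs_le_integral_of_hasDerivWithinAt (g := fun t => v t * ψ t + f t)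
    hk hx.1 (fun t ht => (hψ t (hsub ht)).mono hsub)
    (fun t ht => ((hψ' t (hsub ht)).mono hsub).congr_deriv (by ring))
    ((hv.mul hψc).add hf |>.mono hsub) h0 h0'
  calc exp (-(k * x)) * |ψ x|
      ≤ (∫ t in 0..x, exp (-(k * t)) * |v t * ψ t + f t|) / k := hx_le
    _ ≤ (∫ t in 0..x, (V * (exp (-(k * t)) * |ψ t|) + ε)) / k := by
        gcongr
        refine integral_mono_on hx.1
          (uIcc_of_le hx.1 ▸ ((Continuous.continuousOn (by fun_prop)).mul
            ((hv.mul hψc).add hf).abs).mono hsub).intervalIntegrable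
          ((hint.const_mul V).add intervalIntegrable_const) fun t ht => ?_
        have hvt := hvV t (hsub ht)
        have hft := hfε t (hsub ht)
        calc exp (-(k * t)) * |v t * ψ t + f t|
            ≤ exp (-(k * t)) * (|v t| * |ψ t| + |f t|) := by
              gcongr; exact (abs_add_le _ _).trans_eq (by rw [abs_mul])
          _ ≤ exp (-(k * t)) * (V * |ψ t|) + exp (-(k * t)) * |f t| := by
              rw [mul_add]; gcongr
          _ ≤ V * (exp (-(k * t)) * |ψ t|) + ε := by linarith
    _ = V / k * (∫ t in 0..x, exp (-(k * t)) * |ψ t|) + x * ε / k := by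
        rw [integral_add (hint.const_mul V) intervalIntegrable_const,
          intervalIntegral.integral_const_mul, intervalIntegral.integral_const, smul_eq_mul]
        ring
    _ ≤ V / k * (∫ t in 0..x, exp (-(k * t)) * |ψ t|) + b * ε / k := by
        gcongr; exact hx.2

noncomputable def wkbCorr (a v : ℝ → ℝ) (x : ℝ) : ℝ := a x ^ 2 / 2 - (v x + v 0) / 4

noncomputable def wkbSol (a v : ℝ → ℝ) (k x : ℝ) : ℝ :=
  exp (k * x) * (1 + a x / k + wkbCorr a v x / k ^ 2)

noncomputable def wkbSolDeriv (a v w : ℝ → ℝ) (k x : ℝ) : ℝ :=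
  exp (k * x) * (k * (1 + a x / k + wkbCorr a v x / k ^ 2) + v x / (2 * k)
    + (a x * v x / 2 - w x / 4) / k ^ 2)

/-- With `a' = v / 2`, `w = v'` and `w₂ = v''`, this is `b'' - v b` for `b = wkbCorr a v`. -/
noncomputable def wkbResidual (a v w w₂ : ℝ → ℝ) (x : ℝ) : ℝ :=
  v x ^ 2 / 4 + a x * w x / 2 - w₂ x / 4 - v x * wkbCorr a v x

noncomputable def wkbApprox (a v : ℝ → ℝ) (k x : ℝ) : ℝ :=
  (wkbSol a v k x - wkbSol a v (-k) x) / (2 * k)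

noncomputable def wkbApproxDeriv (a v w : ℝ → ℝ) (k x : ℝ) : ℝ :=
  (wkbSolDeriv a v w k x - wkbSolDeriv a v w (-k) x) / (2 * k)

section WKB

variable {a v w w₂ : ℝ → ℝ} {s : Set ℝ} {k x : ℝ}

theorem hasDerivWithinAt_wkbCorr (ha : HasDerivWithinAt a (v x / 2) s x)
    (hv : HasDerivWithinAt v (w x) s x) :
    HasDerivWithinAt (wkbCorr a v) (a x * v x / 2 - w x / 4) s x :=
  (((ha.pow 2).div_const 2).sub ((hv.add_const (v 0)).div_const 4)).congr_deriv (by ring)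

theorem hasDerivWithinAt_wkbSol (ha : HasDerivWithinAt a (v x / 2) s x)
    (hv : HasDerivWithinAt v (w x) s x) :
    HasDerivWithinAt (wkbSol a v k) (wkbSolDeriv a v w k x) s x := by
  have hb := hasDerivWithinAt_wkbCorr ha hv
  refine ((hasDerivAt_exp_mul k x).hasDerivWithinAt.mul
    (((ha.div_const k).const_add 1).add (hb.div_const (k ^ 2)))).congr_deriv ?_
  unfold wkbSolDeriv
  simp only [Pi.add_apply]
  ring

theorem hasDerivWithinAt_wkbSolDeriv (hk : k ≠ 0) (ha : HasDerivWithinAt a (v x / 2) s x)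
    (hv : HasDerivWithinAt v (w x) s x) (hw : HasDerivWithinAt w (w₂ x) s x) :
    HasDerivWithinAt (wkbSolDeriv a v w k)
      ((v x + k ^ 2) * wkbSol a v k x + exp (k * x) * wkbResidual a v w w₂ x / k ^ 2) s x := by
  have hb := hasDerivWithinAt_wkbCorr ha hv
  refine ((hasDerivAt_exp_mul k x).hasDerivWithinAt.mul
    ((((((ha.div_const k).const_add 1).add (hb.div_const (k ^ 2))).const_mul k).add
      (hv.div_const (2 * k))).add
        ((((ha.mul hv).div_const 2).sub (hw.div_const 4)).div_const (k ^ 2)))).congr_deriv ?_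
  unfold wkbSol wkbResidual
  simp only [Pi.add_apply, Pi.sub_apply, Pi.mul_apply]
  field_simp
  ring

theorem hasDerivWithinAt_wkbApprox (ha : HasDerivWithinAt a (v x / 2) s x)
    (hv : HasDerivWithinAt v (w x) s x) :
    HasDerivWithinAt (wkbApprox a v k) (wkbApproxDeriv a v w k x) s x :=
  ((hasDerivWithinAt_wkbSol ha hv).sub (hasDerivWithinAt_wkbSol ha hv)).div_const (2 * k)

theorem hasDerivWithinAt_wkbApproxDeriv (hk : k ≠ 0) (ha : HasDerivWithinAt a (v x / 2) s x)
    (hv : HasDerivWithinAt v (w x) s x) (hw : HasDerivWithinAt w (w₂ x) s x) :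
    HasDerivWithinAt (wkbApproxDeriv a v w k)
      ((v x + k ^ 2) * wkbApprox a v k x
        + wkbResidual a v w w₂ x * sinh (k * x) / k ^ 3) s x := by
  refine (((hasDerivWithinAt_wkbSolDeriv hk ha hv hw).sub
    (hasDerivWithinAt_wkbSolDeriv (neg_ne_zero.2 hk) ha hv hw)).div_const (2 * k)).congr_deriv ?_
  unfold wkbApprox
  simp only [neg_mul, neg_sq, sinh_eq]
  field_simp
  ring

theorem wkbApprox_zero (ha : a 0 = 0) : wkbApprox a v k 0 = 0 := by
  simp [wkbApprox, wkbSol, ha]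

theorem wkbApproxDeriv_zero (hk : k ≠ 0) (ha : a 0 = 0) : wkbApproxDeriv a v w k 0 = 1 := by
  simp only [wkbApproxDeriv, wkbSolDeriv, wkbCorr, ha, mul_zero, exp_zero]
  field_simp
  ring

end WKB

theorem continuousOn_wkbResidual {a v w w₂ : ℝ → ℝ} {s : Set ℝ} (ha : ContinuousOn a s)
    (hv : ContinuousOn v s) (hw : ContinuousOn w s) (hw₂ : ContinuousOn w₂ s) :
    ContinuousOn (wkbResidual a v w w₂) s := by
  unfold wkbResidual wkbCorr
  fun_prop

theorem exp_neg_mul_sinh_le_half (y : ℝ) : exp (-y) * sinh y ≤ 1 / 2 := by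
  rw [sinh_eq, mul_div_assoc', mul_sub, ← exp_add, neg_add_cancel, exp_zero]
  nlinarith [mul_pos (exp_pos (-y)) (exp_pos (-y))]

theorem abs_sub_wkbApprox_le {a v w w₂ y y' : ℝ → ℝ} {b k V M : ℝ} (hk : 0 < k) (hb : 0 ≤ b)
    (ha : ∀ x ∈ Icc 0 b, HasDerivWithinAt a (v x / 2) (Icc 0 b) x)
    (hv : ∀ x ∈ Icc 0 b, HasDerivWithinAt v (w x) (Icc 0 b) x)
    (hw : ∀ x ∈ Icc 0 b, HasDerivWithinAt w (w₂ x) (Icc 0 b) x)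
    (hw₂ : ContinuousOn w₂ (Icc 0 b)) (ha0 : a 0 = 0)
    (hvV : ∀ x ∈ Icc 0 b, |v x| ≤ V) (hRM : ∀ x ∈ Icc 0 b, |wkbResidual a v w w₂ x| ≤ M)
    (hy : ∀ x ∈ Icc 0 b, HasDerivWithinAt y (y' x) (Icc 0 b) x)
    (hy' : ∀ x ∈ Icc 0 b, HasDerivWithinAt y' ((v x + k ^ 2) * y x) (Icc 0 b) x)
    (hy0 : y 0 = 0) (hy0' : y' 0 = 1) :
    |y b - wkbApprox a v k b| ≤ b * M / (2 * k ^ 4) * exp (V / k * b) * exp (k * b) := by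
  have hvc : ContinuousOn v (Icc 0 b) := fun x hx => (hv x hx).continuousWithinAt
  have hRc := continuousOn_wkbResidual (fun x hx => (ha x hx).continuousWithinAt) hvc
    (fun x hx => (hw x hx).continuousWithinAt) hw₂
  set r : ℝ → ℝ := fun x => wkbResidual a v w w₂ x * sinh (k * x) / k ^ 3
  have hr : ∀ x ∈ Icc 0 b, exp (-(k * x)) * |-r x| ≤ M / (2 * k ^ 3) := by
    intro x hx
    have hsinh : 0 ≤ sinh (k * x) := sinh_nonneg_iff.2 (mul_nonneg hk.le hx.1)
    calc exp (-(k * x)) * |-r x|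
        = |wkbResidual a v w w₂ x| * (exp (-(k * x)) * sinh (k * x)) / k ^ 3 := by
          rw [abs_neg, abs_div, abs_mul, abs_of_nonneg hsinh, abs_of_pos (pow_pos hk 3)]
          ring
      _ ≤ M * (1 / 2) / k ^ 3 := by
          gcongr ?_ / _
          exact mul_le_mul (hRM x hx) (exp_neg_mul_sinh_le_half _)
            (mul_nonneg (exp_pos _).le hsinh) ((abs_nonneg _).trans (hRM x hx))
      _ = M / (2 * k ^ 3) := by ring
  have hψ := exp_neg_mul_abs_le_of_hasDerivWithinAt (ψ := fun x => y x - wkbApprox a v k x)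
    (ψ' := fun x => y' x - wkbApproxDeriv a v w k x) (f := fun x => -r x) hk hb
    (fun x hx => (hy x hx).sub (hasDerivWithinAt_wkbApprox (ha x hx) (hv x hx)))
    (fun x hx => ((hy' x hx).sub (hasDerivWithinAt_wkbApproxDeriv hk.ne' (ha x hx) (hv x hx)
      (hw x hx))).congr_deriv (by ring))
    hvc (by fun_prop) hvV hr (by simp [hy0, wkbApprox_zero ha0])
    (by simp [hy0', wkbApproxDeriv_zero hk.ne' ha0])
  have hexp : exp (-(k * b)) * exp (k * b) = 1 := by rw [← exp_add]; simp
  calc |y b - wkbApprox a v k b|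
      = exp (-(k * b)) * |y b - wkbApprox a v k b| * exp (k * b) := by
        rw [mul_right_comm, hexp, one_mul]
    _ ≤ b * (M / (2 * k ^ 3)) / k * exp (V / k * b) * exp (k * b) := by gcongr
    _ = b * M / (2 * k ^ 4) * exp (V / k * b) * exp (k * b) := by field_simp

theorem eq_wkbApprox_add_wkbSol_neg_div {v : ℝ → ℝ} {k : ℝ} (hk : k ≠ 0) :
    exp (π * k) / (2 * k) *
      (1 + π * ((1 / π) * ∫ x in (0:ℝ)..π, v x) / (2 * k) +
        (π ^ 2 * ((1 / π) * ∫ x in (0:ℝ)..π, v x) ^ 2 - 2 * (v 0 + v π)) / (8 * k ^ 2))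
      = wkbApprox (fun x => (∫ t in (0:ℝ)..x, v t) / 2) v k π
        + wkbSol (fun x => (∫ t in (0:ℝ)..x, v t) / 2) v (-k) π / (2 * k) := by
  simp only [wkbApprox, wkbSol, wkbCorr, mul_comm k π]
  field_simp
  ring

theorem pow_three_mul_exp_neg_pi_mul_le {k : ℝ} (hk : 0 ≤ k) :
    k ^ 3 * exp (-(π * k)) ≤ exp (π * k) := by
  have hk3 : k ^ 3 ≤ exp (2 * π * k) :=
    calc k ^ 3 ≤ exp k ^ 3 := by gcongr; linarith [add_one_le_exp k]
      _ = exp (3 * k) := by rw [← exp_nat_mul]; norm_num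
      _ ≤ exp (2 * π * k) := exp_le_exp.2 (by nlinarith [pi_gt_three])
  calc k ^ 3 * exp (-(π * k)) ≤ exp (2 * π * k) * exp (-(π * k)) := by gcongr
    _ = exp (π * k) := by rw [← exp_add]; ring_nf

theorem abs_wkbSol_neg_pi_div_le {a v : ℝ → ℝ} {k : ℝ} (hk : 1 ≤ k) :
    |wkbSol a v (-k) π / (2 * k)| ≤ (1 + |a π| + |wkbCorr a v π|) / 2 * (exp (π * k) / k ^ 4) := by
  have hk0 : 0 < k := one_pos.trans_le hk
  have hpoly : |1 + a π / -k + wkbCorr a v π / (-k) ^ 2| ≤ 1 + |a π| + |wkbCorr a v π| := by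
    refine (abs_add_three _ _ _).trans ?_
    rw [abs_one, abs_div, abs_div, abs_pow, abs_neg, abs_of_pos hk0]
    gcongr
    · exact div_le_self (abs_nonneg _) hk
    · exact div_le_self (abs_nonneg _) (one_le_pow₀ hk)
  calc |wkbSol a v (-k) π / (2 * k)|
      = exp (-(π * k)) * |1 + a π / -k + wkbCorr a v π / (-k) ^ 2| / (2 * k) := by
        rw [wkbSol, abs_div, abs_mul, abs_exp, abs_of_pos (by positivity : (0:ℝ) < 2 * k)]
        ring_nf
    _ ≤ exp (-(π * k)) * (1 + |a π| + |wkbCorr a v π|) / (2 * k) := by gcongr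
    _ = (1 + |a π| + |wkbCorr a v π|) / 2 * (k ^ 3 * exp (-(π * k)) / k ^ 4) := by
        field_simp
    _ ≤ (1 + |a π| + |wkbCorr a v π|) / 2 * (exp (π * k) / k ^ 4) := by
        gcongr
        exact pow_three_mul_exp_neg_pi_mul_le hk0.le

theorem ContDiffOn.exists_hasDerivWithinAt_two {f : ℝ → ℝ} {s : Set ℝ}
    (hf : ContDiffOn ℝ 2 f s) (hs : UniqueDiffOn ℝ s) :
    ∃ f' f'' : ℝ → ℝ, (∀ x ∈ s, HasDerivWithinAt f (f' x) s x) ∧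
      (∀ x ∈ s, HasDerivWithinAt f' (f'' x) s x) ∧ ContinuousOn f'' s := by
  have hf' : ContDiffOn ℝ 1 (derivWithin f s) s := hf.derivWithin hs (by norm_num)
  refine ⟨derivWithin f s, derivWithin (derivWithin f s) s,
    fun x hx => (hf.differentiableOn (by norm_num) x hx).hasDerivWithinAt,
    fun x hx => (hf'.differentiableOn (by norm_num) x hx).hasDerivWithinAt, ?_⟩
  exact (hf'.derivWithin hs (m := 0) (by norm_num)).continuousOn

theorem characteristic_determinant_asymptotics
    (v : ℝ → ℝ) (hv : ContDiffOn ℝ 2 v (Icc (0:ℝ) π))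
    (y₁ y₁' : ℝ → ℝ → ℝ)
    (hy₁ : ∀ l : ℝ, ∀ x ∈ Icc (0:ℝ) π, HasDerivWithinAt (y₁ l) (y₁' l x) (Icc (0:ℝ) π) x)
    (hy₁' : ∀ l : ℝ, ∀ x ∈ Icc (0:ℝ) π,
      HasDerivWithinAt (y₁' l) ((v x - l) * y₁ l x) (Icc (0:ℝ) π) x)
    (h10 : ∀ l : ℝ, y₁ l 0 = 0) (h11 : ∀ l : ℝ, y₁' l 0 = 1) :
    ∃ C : ℝ, 0 < C ∧ ∃ k₀ : ℝ, ∀ k : ℝ, k₀ ≤ k →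
      |y₁ (-(k ^ 2)) π - Real.exp (π * k) / (2 * k) *
          (1 + π * ((1 / π) * ∫ x in (0:ℝ)..π, v x) / (2 * k) +
            (π ^ 2 * ((1 / π) * ∫ x in (0:ℝ)..π, v x) ^ 2 - 2 * (v 0 + v π)) / (8 * k ^ 2))| ≤
        C * Real.exp (π * k) / k ^ 4 := by
  obtain ⟨w, w₂, hvw, hww₂, hw₂⟩ := hv.exists_hasDerivWithinAt_two (uniqueDiffOn_Icc pi_pos)
  set a : ℝ → ℝ := fun x => (∫ t in (0:ℝ)..x, v t) / 2
  have ha : ∀ x ∈ Icc 0 π, HasDerivWithinAt a (v x / 2) (Icc 0 π) x := fun x hx =>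
    (hasDerivWithinAt_integral_Icc hv.continuousOn hx).div_const 2
  have h0π : (0:ℝ) ∈ Icc 0 π := ⟨le_rfl, pi_pos.le⟩
  obtain ⟨V, hV⟩ := isCompact_Icc.exists_bound_of_continuousOn hv.continuousOn
  obtain ⟨M, hM⟩ := isCompact_Icc.exists_bound_of_continuousOn (continuousOn_wkbResidual
    (fun x hx => (ha x hx).continuousWithinAt) hv.continuousOn
    (fun x hx => (hww₂ x hx).continuousWithinAt) hw₂)
  have hV0 : 0 ≤ V := (norm_nonneg _).trans (hV 0 h0π)
  have hM0 : 0 ≤ M := (norm_nonneg _).trans (hM 0 h0π)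
  refine ⟨π * M / 2 * exp (V * π) + (1 + |a π| + |wkbCorr a v π|) / 2,
    add_pos_of_nonneg_of_pos (by positivity) (by positivity), 1, fun k hk => ?_⟩
  have hk0 : 0 < k := one_pos.trans_le hk
  have herr := abs_sub_wkbApprox_le hk0 pi_pos.le ha hvw hww₂ hw₂ (by simp [a])
    hV hM (hy₁ (-(k ^ 2))) (fun x hx => (hy₁' _ x hx).congr_deriv (by ring)) (h10 _) (h11 _)
  rw [eq_wkbApprox_add_wkbSol_neg_div hk0.ne', ← sub_sub]
  calc _ ≤ |y₁ (-(k ^ 2)) π - wkbApprox a v k π| + |wkbSol a v (-k) π / (2 * k)| := abs_sub _ _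
    _ ≤ π * M / 2 * exp (V / k * π) * (exp (π * k) / k ^ 4)
        + (1 + |a π| + |wkbCorr a v π|) / 2 * (exp (π * k) / k ^ 4) := by
      refine add_le_add (herr.trans_eq ?_) (abs_wkbSol_neg_pi_div_le hk)
      rw [mul_comm k π]; field_simp
    _ ≤ π * M / 2 * exp (V * π) * (exp (π * k) / k ^ 4)
        + (1 + |a π| + |wkbCorr a v π|) / 2 * (exp (π * k) / k ^ 4) := by
      gcongr; exact div_le_self hV0 hk
    _ = _ := by ring
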